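/- Let E be an infinite subset of ℝⁿ. Then the angle set A(E) contains angles arbitrarily close to 0 or arbitrarily close to π; that is, for every ε > 0 there exist three distinct points x, y, z ∈ E with ∠yxz < ε or ∠yxz > π − ε. -/
import Mathlib

open InnerProductGeometry in
lemma angle_eq_arccos_dist {V : Type*} [NormedAddCommGroup V] [InnerProductSpace ℝ V]
    (u v : V) (hu : ‖u‖ = 1) (hv : ‖v‖ = 1) :
    InnerProductGeometry.angle u v = Real.arccos (1 - ‖u - v‖ ^ 2 / 2) := by
  have h := norm_sub_sq_real u v
  rw [hu, hv] at h
  rw [InnerProductGeometry.angle, hu, hv]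
  ring_nf
  congr 1
  nlinarith [h]

lemma small_arccos {ε : ℝ} (hε : 0 < ε) :
    ∃ δ > 0, ∀ t : ℝ, |t| < δ → Real.arccos (1 - t ^ 2 / 2) < ε := by
  have hc : ContinuousAt (fun t : ℝ => Real.arccos (1 - t ^ 2 / 2)) 0 :=
    (Real.continuous_arccos.comp (by continuity)).continuousAt
  have := Metric.continuousAt_iff.mp hc ε hε
  obtain ⟨δ, hδ, h⟩ := this
  refine ⟨δ, hδ, fun t ht => ?_⟩
  have := h (x := t) (by simpa [Real.dist_eq] using ht)
  simp only [Real.dist_eq] at this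
  have h0 : Real.arccos (1 - (0:ℝ) ^ 2 / 2) = 0 := by norm_num [Real.arccos_one]
  rw [h0, sub_zero] at this
  have := abs_lt.mp this
  linarith [this.2]

/-- every infinite set `E ⊆ ℝⁿ` contains, for every `ε > 0`, three
distinct points forming an angle `< ε` or `> π − ε`. -/
theorem stmt13 (n : ℕ) (E : Set (EuclideanSpace ℝ (Fin n))) (hE : E.Infinite)
    (ε : ℝ) (hε : 0 < ε) :
    ∃ x ∈ E, ∃ y ∈ E, ∃ z ∈ E, x ≠ y ∧ x ≠ z ∧ y ≠ z ∧
      (EuclideanGeometry.angle y x z < ε ∨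
        EuclideanGeometry.angle y x z > Real.pi - ε) := by
  obtain ⟨x0, hx0⟩ := hE.nonempty
  set S : Set (EuclideanSpace ℝ (Fin n)) := E \ {x0} with hSdef
  have hS : S.Infinite := hE.diff (Set.finite_singleton x0)
  set f : EuclideanSpace ℝ (Fin n) → EuclideanSpace ℝ (Fin n) :=
    fun y => ‖y - x0‖⁻¹ • (y - x0) with hf
  have hfnorm : ∀ y ∈ S, ‖f y‖ = 1 := by
    intro y hy
    have hne : y - x0 ≠ 0 := sub_ne_zero.mpr hy.2
    simp [hf, norm_smul, abs_of_nonneg (norm_nonneg _), inv_mul_cancel₀ (norm_ne_zero_iff.mpr hne)]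
  have hangle : ∀ y ∈ S, ∀ z ∈ S,
      EuclideanGeometry.angle y x0 z = InnerProductGeometry.angle (f y) (f z) := by
    intro y hy z hz
    have hy' : (0:ℝ) < ‖y - x0‖⁻¹ :=
      inv_pos.mpr (norm_pos_iff.mpr (sub_ne_zero.mpr hy.2))
    have hz' : (0:ℝ) < ‖z - x0‖⁻¹ :=
      inv_pos.mpr (norm_pos_iff.mpr (sub_ne_zero.mpr hz.2))
    rw [EuclideanGeometry.angle, hf]
    rw [InnerProductGeometry.angle_smul_left_of_pos _ _ hy',
      InnerProductGeometry.angle_smul_right_of_pos _ _ hz']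
    norm_num [vsub_eq_sub]
  obtain ⟨δ, hδ, hδε⟩ := small_arccos hε
  -- pigeonhole on the compact sphere
  have hcomp : IsCompact (Metric.sphere (0 : EuclideanSpace ℝ (Fin n)) 1) := isCompact_sphere _ _
  obtain ⟨t, htfin, hcov⟩ := Metric.totallyBounded_iff.mp hcomp.totallyBounded (δ/2) (by linarith)
  have hmaps : Set.MapsTo (fun y => Set.indicator Set.univ id 0) S Set.univ := by
    exact fun y hy => trivial
  -- choose for each y in S a center
  have hmem : ∀ y ∈ S, f y ∈ Metric.sphere (0 : EuclideanSpace ℝ (Fin n)) 1 := by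
    intro y hy
    simpa [Metric.mem_sphere, dist_eq_norm] using hfnorm y hy
  classical
  have hchoice : ∀ y ∈ S, ∃ c ∈ t, f y ∈ Metric.ball c (δ/2) := by
    intro y hy
    have := hcov (hmem y hy)
    simpa using this
  choose g hg1 hg2 using fun y (hy : y ∈ S) => hchoice y hy
  set g' : EuclideanSpace ℝ (Fin n) → EuclideanSpace ℝ (Fin n) :=
    fun y => if hy : y ∈ S then g y hy else 0 with hg'
  have hmapsTo : Set.MapsTo g' S t := by
    intro y hy; simp only [hg', dif_pos hy]; exact hg1 y hy
  obtain ⟨y, hy, z, hz, hyz, heq⟩ := hS.exists_ne_map_eq_of_mapsTo hmapsTo htfin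
  -- dist (f y) (f z) < δ
  have hdy := hg2 y hy
  have hdz := hg2 z hz
  have heq' : g y hy = g z hz := by
    have e1 : g' y = g y hy := dif_pos hy
    have e2 : g' z = g z hz := dif_pos hz
    rw [← e1, ← e2, heq]
  clear heq
  rename' heq' => heq
  have hdist : dist (f y) (f z) < δ := by
    have h1 : dist (f y) (g y hy) < δ/2 := Metric.mem_ball.mp hdy
    have h2 : dist (g y hy) (f z) < δ/2 := by
      rw [heq, dist_comm]; exact Metric.mem_ball.mp hdz
    calc dist (f y) (f z) ≤ dist (f y) (g y hy) + dist (g y hy) (f z) := dist_triangle _ _ _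
      _ < δ/2 + δ/2 := add_lt_add h1 h2
      _ = δ := by ring
  refine ⟨x0, hx0, y, hy.1, z, hz.1, Ne.symm hy.2, Ne.symm hz.2, hyz, Or.inl ?_⟩
  rw [hangle y hy z hz, angle_eq_arccos_dist _ _ (hfnorm y hy) (hfnorm z hz)]
  apply hδε
  rw [abs_of_nonneg (norm_nonneg _)]
  rw [dist_eq_norm] at hdist
  exact hdist
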